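/- Suppose two random variables X and Y with CDFs F and G (both integrable) satisfy |F(z) - G(z)| ≤ K/(1+|z|³) for all z ∈ ℝ and some constant K. Then for every C ∈ ℝ, |E[X·1{X ≥ C}] - E[Y·1{Y ≥ C}]| ≤ K·(|C|/(1+|C|³) + ∫_ℝ dz/(1+|z|³)) ≤ K·(1 + ∫_ℝ dz/(1+|z|³)). -/

import Mathlib

/-!
By the layer-cake formula, `E[X; X ≥ C] = C P(X ≥ C) + ∫_{t > 0} P(X > C + t) dt`.
Letting `z ↑ C` in the CDF bound gives `|P(X ≥ C) - P(Y ≥ C)| ≤ K / (1 + |C|³)`, which controls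
the first term, while the tails differ pointwise by at most `K / (1 + |C + t|³)`, whose integral
over `t > 0` is at most `K ∫ dz / (1 + |z|³)`.
-/

open MeasureTheory Set Filter Topology

section TruncatedMoment

variable {Ω : Type*} [MeasurableSpace Ω] {μ : Measure Ω} {X Y : Ω → ℝ}

theorem Integrable.integrableOn_measureReal_lt {f : Ω → ℝ} (hf : Integrable f μ)
    (hf_nn : 0 ≤ᵐ[μ] f) : IntegrableOn (fun t => μ.real {ω | t < f ω}) (Ioi 0) := by
  have hanti : Antitone fun t => μ {ω | t < f ω} :=
    fun _ _ hst => measure_mono fun _ h => hst.trans_lt h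
  have hmeas : Measurable fun t => μ.real {ω | t < f ω} := hanti.measurable.ennreal_toReal
  refine ⟨hmeas.aestronglyMeasurable, ?_⟩
  rw [hasFiniteIntegral_iff_ofReal (Eventually.of_forall fun _ => measureReal_nonneg),
    setLIntegral_congr_fun measurableSet_Ioi
      fun t ht => ofReal_measureReal (hf.measure_gt_lt_top ht).ne,
    ← lintegral_eq_lintegral_meas_lt μ hf_nn hf.aemeasurable]
  exact hf.lintegral_lt_top

theorem measureReal_restrict_le_sub_lt {C t : ℝ} (hX : Measurable X) (ht : 0 < t) :
    (μ.restrict {ω | C ≤ X ω}).real {ω | t < X ω - C} = μ.real {ω | C + t < X ω} := by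
  rw [measureReal_restrict_apply' (measurableSet_le measurable_const hX)]
  congr 1
  ext ω
  simp only [mem_inter_iff, mem_ofPred_eq]
  constructor
  · rintro ⟨h, -⟩; linarith
  · intro h; constructor <;> linarith

theorem tendsto_measureReal_le_of_tendsto {u : ℕ → ℝ} {C : ℝ} (hu : Monotone u)
    (hu_lt : ∀ n, u n < C) (hlim : Tendsto u atTop (𝓝 C)) (Z : Ω → ℝ)
    (hfin : μ {ω | Z ω < C} ≠ ⊤) :
    Tendsto (fun n => μ.real {ω | Z ω ≤ u n}) atTop (𝓝 (μ.real {ω | Z ω < C})) := by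
  have hunion : ⋃ n, {ω | Z ω ≤ u n} = {ω | Z ω < C} := by
    ext ω
    simp only [mem_iUnion, mem_ofPred_eq]
    constructor
    · rintro ⟨n, hn⟩
      exact hn.trans_lt (hu_lt n)
    · intro h
      exact ((hlim.eventually (lt_mem_nhds h)).exists).imp fun _ => le_of_lt
  have hmono : Monotone fun n => {ω | Z ω ≤ u n} := fun _ _ hnm _ h => h.trans (hu hnm)
  have := tendsto_measure_iUnion_atTop (μ := μ) hmono
  rw [hunion] at this
  exact (ENNReal.tendsto_toReal hfin).comp this

variable [IsFiniteMeasure μ]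

theorem setIntegral_le_eq_add_integral_measureReal_lt (hX : Measurable X)
    (hXi : Integrable X μ) (C : ℝ) :
    ∫ ω in {ω | C ≤ X ω}, X ω ∂μ =
      C * μ.real {ω | C ≤ X ω} + ∫ t in Ioi 0, μ.real {ω | C + t < X ω} := by
  set s := {ω | C ≤ X ω}
  have hs : MeasurableSet s := measurableSet_le measurable_const hX
  have hsub : Integrable (fun ω => X ω - C) (μ.restrict s) :=
    (hXi.sub (integrable_const C)).integrableOn
  have hnn : 0 ≤ᵐ[μ.restrict s] fun ω => X ω - C :=
    (ae_restrict_mem hs).mono fun ω (h : C ≤ X ω) => sub_nonneg.2 h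
  have hlayer : ∫ ω in s, (X ω - C) ∂μ = ∫ t in Ioi 0, μ.real {ω | C + t < X ω} := by
    rw [hsub.integral_eq_integral_meas_lt hnn]
    exact setIntegral_congr_fun measurableSet_Ioi fun t ht => measureReal_restrict_le_sub_lt hX ht
  rw [← hlayer, integral_sub hXi.integrableOn (integrable_const C), setIntegral_const, smul_eq_mul]
  ring

theorem integrableOn_measureReal_add_lt (hX : Measurable X) (hXi : Integrable X μ) (C : ℝ) :
    IntegrableOn (fun t => μ.real {ω | C + t < X ω}) (Ioi 0) := by
  have hs : MeasurableSet {ω | C ≤ X ω} := measurableSet_le measurable_const hX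
  have h := Integrable.integrableOn_measureReal_lt (hXi.sub (integrable_const C)).integrableOn
    ((ae_restrict_mem hs).mono fun ω (h : C ≤ X ω) => sub_nonneg.2 h)
  exact h.congr_fun (fun t ht => measureReal_restrict_le_sub_lt hX ht) measurableSet_Ioi

theorem abs_measureReal_compl_sub_compl {s t : Set Ω} (hs : MeasurableSet s)
    (ht : MeasurableSet t) : |μ.real sᶜ - μ.real tᶜ| = |μ.real s - μ.real t| := by
  rw [measureReal_compl hs, measureReal_compl ht, ← abs_neg]
  ring_nf

theorem abs_measureReal_lt_sub_lt (hX : Measurable X) (hY : Measurable Y) (z : ℝ) :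
    |μ.real {ω | z < X ω} - μ.real {ω | z < Y ω}| =
      |μ.real {ω | X ω ≤ z} - μ.real {ω | Y ω ≤ z}| := by
  simpa only [compl_ofPred, not_le] using abs_measureReal_compl_sub_compl (μ := μ)
    (measurableSet_le hX measurable_const) (measurableSet_le hY measurable_const)

theorem abs_measureReal_le_sub_le (hX : Measurable X) (hY : Measurable Y) (z : ℝ) :
    |μ.real {ω | z ≤ X ω} - μ.real {ω | z ≤ Y ω}| =
      |μ.real {ω | X ω < z} - μ.real {ω | Y ω < z}| := by
  simpa only [compl_ofPred, not_lt] using abs_measureReal_compl_sub_compl (μ := μ)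
    (measurableSet_lt hX measurable_const) (measurableSet_lt hY measurable_const)

theorem abs_measureReal_lt_sub_le {φ : ℝ → ℝ} {C : ℝ} (hφ : ContinuousWithinAt φ (Iio C) C)
    (h : ∀ z < C, |μ.real {ω | X ω ≤ z} - μ.real {ω | Y ω ≤ z}| ≤ φ z) :
    |μ.real {ω | X ω < C} - μ.real {ω | Y ω < C}| ≤ φ C := by
  obtain ⟨u, hu_mono, hu_lt, hu_lim⟩ := exists_seq_strictMono_tendsto C
  have hu : Tendsto u atTop (𝓝[<] C) :=
    tendsto_nhdsWithin_iff.2 ⟨hu_lim, Eventually.of_forall hu_lt⟩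
  exact le_of_tendsto_of_tendsto'
    ((tendsto_measureReal_le_of_tendsto hu_mono.monotone hu_lt hu_lim X (by finiteness)).sub
      (tendsto_measureReal_le_of_tendsto hu_mono.monotone hu_lt hu_lim Y (by finiteness))).abs
    (hφ.tendsto.comp hu) fun n => h (u n) (hu_lt n)

variable {φ : ℝ → ℝ}

theorem abs_integral_measureReal_add_lt_sub_le (hX : Measurable X) (hY : Measurable Y)
    (hXi : Integrable X μ) (hYi : Integrable Y μ) (hφ : Integrable φ)
    (h : ∀ z, |μ.real {ω | X ω ≤ z} - μ.real {ω | Y ω ≤ z}| ≤ φ z) (C : ℝ) :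
    |(∫ t in Ioi 0, μ.real {ω | C + t < X ω}) - ∫ t in Ioi 0, μ.real {ω | C + t < Y ω}| ≤
      ∫ z, φ z := by
  have hXt := integrableOn_measureReal_add_lt hX hXi C
  have hYt := integrableOn_measureReal_add_lt hY hYi C
  have hφC : Integrable fun t => φ (C + t) := hφ.comp_add_left C
  calc |(∫ t in Ioi 0, μ.real {ω | C + t < X ω}) - ∫ t in Ioi 0, μ.real {ω | C + t < Y ω}|
      = |∫ t in Ioi 0, (μ.real {ω | C + t < X ω} - μ.real {ω | C + t < Y ω})| := by
        rw [integral_sub hXt hYt]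
    _ ≤ ∫ t in Ioi 0, |μ.real {ω | C + t < X ω} - μ.real {ω | C + t < Y ω}| :=
        abs_integral_le_integral_abs
    _ ≤ ∫ t in Ioi 0, φ (C + t) :=
        setIntegral_mono_on (hXt.sub hYt).abs hφC.integrableOn measurableSet_Ioi
          fun t _ => (abs_measureReal_lt_sub_lt hX hY (C + t)).trans_le (h (C + t))
    _ ≤ ∫ t, φ (C + t) :=
        setIntegral_le_integral hφC (Eventually.of_forall fun t => (abs_nonneg _).trans (h _))
    _ = ∫ z, φ z := integral_add_left_eq_self φ C

theorem abs_setIntegral_le_sub_le {C : ℝ} (hX : Measurable X) (hY : Measurable Y)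
    (hXi : Integrable X μ) (hYi : Integrable Y μ) (hφ : Integrable φ)
    (hφC : ContinuousWithinAt φ (Iio C) C)
    (h : ∀ z, |μ.real {ω | X ω ≤ z} - μ.real {ω | Y ω ≤ z}| ≤ φ z) :
    |(∫ ω in {ω | C ≤ X ω}, X ω ∂μ) - ∫ ω in {ω | C ≤ Y ω}, Y ω ∂μ| ≤
      |C| * φ C + ∫ z, φ z := by
  have hpoint : |μ.real {ω | C ≤ X ω} - μ.real {ω | C ≤ Y ω}| ≤ φ C :=
    (abs_measureReal_le_sub_le hX hY C).trans_le (abs_measureReal_lt_sub_le hφC fun z _ => h z)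
  have htail := abs_integral_measureReal_add_lt_sub_le hX hY hXi hYi hφ h C
  rw [setIntegral_le_eq_add_integral_measureReal_lt hX hXi,
    setIntegral_le_eq_add_integral_measureReal_lt hY hYi]
  calc _ = |C * (μ.real {ω | C ≤ X ω} - μ.real {ω | C ≤ Y ω}) +
        ((∫ t in Ioi 0, μ.real {ω | C + t < X ω}) - ∫ t in Ioi 0, μ.real {ω | C + t < Y ω})| := by
        ring_nf
    _ ≤ |C| * φ C + ∫ z, φ z := by grw [abs_add_le, abs_mul, hpoint, htail]

end TruncatedMoment

theorem integrable_one_div_one_add_abs_pow_three : Integrable fun z : ℝ => 1 / (1 + |z| ^ 3) := by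
  refine (integrable_inv_one_add_sq.const_mul 2).mono'
    (continuous_const.div (by fun_prop) fun z => by positivity).aestronglyMeasurable
    (Eventually.of_forall fun z => ?_)
  rw [Real.norm_of_nonneg (by positivity), ← div_eq_mul_inv,
    div_le_div_iff₀ (by positivity) (by positivity)]
  nlinarith [sq_abs z, mul_nonneg (abs_nonneg z) (sq_nonneg (|z| - 1)), sq_nonneg (2 * |z| - 1)]

theorem abs_div_one_add_abs_pow_three_le_one (x : ℝ) : |x| / (1 + |x| ^ 3) ≤ 1 := by
  rw [div_le_one (by positivity)]
  nlinarith [abs_nonneg x, mul_nonneg (abs_nonneg x) (sq_nonneg (|x| - 1)), sq_nonneg (|x| - 1)]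

/-- If the CDFs of two integrable random variables `X, Y` satisfy the
non-uniform bound `|F(z) - G(z)| ≤ K/(1+|z|³)`, then the truncated first
moments above any threshold `C` differ by at most
`K·(|C|/(1+|C|³) + ∫ dz/(1+|z|³)) ≤ K·(1 + ∫ dz/(1+|z|³))`. -/
theorem stmt_4 {Ω : Type*} [MeasurableSpace Ω] (μ : Measure Ω)
    [IsProbabilityMeasure μ]
    (X Y : Ω → ℝ) (hX : Measurable X) (hY : Measurable Y)
    (hXint : Integrable X μ) (hYint : Integrable Y μ)
    (F G : ℝ → ℝ)
    (hF : ∀ z, F z = (μ {ω | X ω ≤ z}).toReal)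
    (hG : ∀ z, G z = (μ {ω | Y ω ≤ z}).toReal)
    (K : ℝ) (hK : ∀ z, |F z - G z| ≤ K / (1 + |z| ^ 3)) (C : ℝ) :
    |(∫ ω in {ω | C ≤ X ω}, X ω ∂μ) - ∫ ω in {ω | C ≤ Y ω}, Y ω ∂μ| ≤
        K * (|C| / (1 + |C| ^ 3) + ∫ z : ℝ, 1 / (1 + |z| ^ 3)) ∧
      K * (|C| / (1 + |C| ^ 3) + ∫ z : ℝ, 1 / (1 + |z| ^ 3)) ≤
        K * (1 + ∫ z : ℝ, 1 / (1 + |z| ^ 3)) := by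
  have hcdf : ∀ z, |μ.real {ω | X ω ≤ z} - μ.real {ω | Y ω ≤ z}| ≤ K / (1 + |z| ^ 3) :=
    fun z => by simpa only [hF, hG, measureReal_def] using hK z
  have hK0 : 0 ≤ K := by simpa using (abs_nonneg _).trans (hK 0)
  have hφ : Integrable fun z : ℝ => K / (1 + |z| ^ 3) := by
    simpa only [mul_one_div] using integrable_one_div_one_add_abs_pow_three.const_mul K
  have hφC : Continuous fun z : ℝ => K / (1 + |z| ^ 3) :=
    continuous_const.div (by fun_prop) fun z => by positivity
  have hφ_int : ∫ z : ℝ, K / (1 + |z| ^ 3) = K * ∫ z : ℝ, 1 / (1 + |z| ^ 3) := by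
    simp only [← mul_one_div K, integral_const_mul]
  refine ⟨?_, by gcongr; exact abs_div_one_add_abs_pow_three_le_one C⟩
  calc _ ≤ |C| * (K / (1 + |C| ^ 3)) + ∫ z : ℝ, K / (1 + |z| ^ 3) :=
        abs_setIntegral_le_sub_le hX hY hXint hYint hφ hφC.continuousWithinAt hcdf
    _ = _ := by rw [hφ_int]; ring
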